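/- arXiv:2012.08810 — 3 statements merged into one kernel-verified Lean document; each statement's English description precedes it below -/
import Mathlib

section
/- Let G be a finite simple graph with vertex set V, let z : V → ℝ be injective, let x ∈ V, and let S = {v ∈ V : z v < z x}. Then the number of connected components of the subgraph induced on S ∪ {x} is strictly greater than the number of connected components of the subgraph induced on S if and only if x is a local minimum of z, i.e., a new connected component is born at level z x in the sublevel filtration exactly when x is a local minimum. -/
/-- For a finite simple graph `G`, injective `z : V → ℝ`, a vertex `x`, and
`S = {v | z v < z x}`, the number of connected components of the subgraph induced on `S ∪ {x}`
is strictly greater than the number of connected components of the subgraph induced on `S` if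
and only if `x` is a local minimum of `z`: a new connected component is born at level `z x`
in the sublevel filtration exactly when `x` is a local minimum. -/
theorem stmt_2 {V : Type*} [Fintype V] (G : SimpleGraph V) (z : V → ℝ)
    (hz : Function.Injective z) (x : V)
    (S : Set V) (hS : S = {v : V | z v < z x}) :
    Nat.card (G.induce S).ConnectedComponent <
      Nat.card (G.induce (S ∪ {x})).ConnectedComponent ↔
    (∀ y : V, G.Adj x y → z x < z y) := by
  classical
  have hmem : ∀ v : V, v ∈ S ↔ z v < z x := by intro v; rw [hS]; rfl
  have hxS : x ∉ S := fun h => lt_irrefl _ ((hmem x).mp h)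
  have hST : S ⊆ S ∪ {x} := Set.subset_union_left
  have hxT : x ∈ S ∪ {x} := Set.mem_union_right _ rfl
  let φ : G.induce S →g G.induce (S ∪ {x}) :=
    ⟨Set.inclusion hST, fun {a b} h => h⟩
  let Φ : (G.induce S).ConnectedComponent → (G.induce (S ∪ {x})).ConnectedComponent :=
    SimpleGraph.ConnectedComponent.map φ
  constructor
  · -- count increase → local min
    intro hlt
    by_contra h
    push_neg at h
    obtain ⟨y, hadj, hle⟩ := h
    have hyx : y ≠ x := fun e => (G.irrefl (e ▸ hadj))
    have hyS : y ∈ S := (hmem y).mpr (lt_of_le_of_ne hle (fun e => hyx (hz e)))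
    -- Φ is surjective
    have hsurj : Function.Surjective Φ := by
      intro c
      refine c.ind ?_
      rintro ⟨v, hv⟩
      rcases hv with hvS | hvx
      · exact ⟨(G.induce S).connectedComponentMk ⟨v, hvS⟩, rfl⟩
      · refine ⟨(G.induce S).connectedComponentMk ⟨y, hyS⟩, ?_⟩
        simp only [Φ, SimpleGraph.ConnectedComponent.map_mk]
        refine SimpleGraph.ConnectedComponent.sound ?_
        refine SimpleGraph.Adj.reachable ?_
        show G.Adj y v
        rw [hvx]
        exact hadj.symm
    have := Nat.card_le_card_of_surjective Φ hsurj
    omega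
  · -- local min → count increase
    intro hmin
    -- x is isolated in the induced graph on S ∪ {x}
    have hiso : ∀ m : (S ∪ {x} : Set V), ¬ (G.induce (S ∪ {x})).Adj ⟨x, hxT⟩ m := by
      rintro ⟨m, hm⟩ hadj
      have hGxm : G.Adj x m := hadj
      have hmx : m ≠ x := fun e => G.irrefl (e ▸ hGxm)
      have hmS : m ∈ S := hm.resolve_right hmx
      have : z x < z m := hmin m hGxm
      exact absurd ((hmem m).mp hmS) (not_lt.mpr this.le)
    -- any vertex reachable from x is x itself
    have hxcomp : ∀ v : (S ∪ {x} : Set V),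
        (G.induce (S ∪ {x})).Reachable ⟨x, hxT⟩ v → v = ⟨x, hxT⟩ := by
      intro v hr
      obtain ⟨w⟩ := hr
      cases w with
      | nil => rfl
      | cons h p => exact absurd h (hiso _)
    -- walks staying in S: reachability in T between S-vertices gives reachability in S
    have key : ∀ (u v : (S ∪ {x} : Set V)) (w : (G.induce (S ∪ {x})).Walk u v)
        (hu : ↑u ∈ S) (hv : ↑v ∈ S),
        (G.induce S).Reachable ⟨u, hu⟩ ⟨v, hv⟩ := by
      intro u v w
      induction w with
      | nil => intro hu hv; rfl
      | @cons a b c h p ih =>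
        intro hu hv
        have hbS : ↑b ∈ S := by
          rcases b.2 with hbS | hbx
          · exact hbS
          · exfalso
            have hGab : G.Adj ↑a ↑b := h
            have hbx' : (b : V) = x := hbx
            have hxa : G.Adj x ↑a := by
              have := hGab.symm; rwa [hbx'] at this
            have h1 : z x < z ↑a := hmin _ hxa
            exact absurd ((hmem _).mp hu) (not_lt.mpr h1.le)
        have hadjS : (G.induce S).Adj ⟨↑a, hu⟩ ⟨↑b, hbS⟩ := h
        exact hadjS.reachable.trans (ih hbS hv)
    -- Φ is injective
    have hinj : Function.Injective Φ := by
      intro c d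
      refine c.ind fun a => d.ind fun b => ?_
      intro hcd
      obtain ⟨a, ha⟩ := a
      obtain ⟨b, hb⟩ := b
      simp only [Φ, SimpleGraph.ConnectedComponent.map_mk] at hcd
      have hr := SimpleGraph.ConnectedComponent.eq.mp hcd
      obtain ⟨w⟩ := hr
      exact SimpleGraph.ConnectedComponent.sound (key _ _ w ha hb)
    -- component of x is not in range of Φ
    have hnotmem : (G.induce (S ∪ {x})).connectedComponentMk ⟨x, hxT⟩ ∉ Set.range Φ := by
      rintro ⟨c, hc⟩
      revert hc
      refine c.ind fun a => ?_
      intro hc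
      simp only [Φ, SimpleGraph.ConnectedComponent.map_mk] at hc
      have hr := SimpleGraph.ConnectedComponent.eq.mp hc
      have := hxcomp _ hr.symm
      have : (φ a : V) = x := congrArg Subtype.val this
      have hax : (a : V) = x := this
      exact hxS (hax ▸ a.2)
    have hfin1 : Fintype (G.induce S).ConnectedComponent := Fintype.ofFinite _
    have hfin2 : Fintype (G.induce (S ∪ {x})).ConnectedComponent := Fintype.ofFinite _
    rw [Nat.card_eq_fintype_card, Nat.card_eq_fintype_card]
    exact Fintype.card_lt_of_injective_of_notMem Φ hinj hnotmem
end

section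
/- Let F be a finite forest (a finite simple acyclic graph) with vertex set V, let f : V → ℝ be injective, let r ∈ ℝ, and let S = {v ∈ V : f v ≥ r}. Then the number of connected components of the subgraph of F induced on S equals Σ_{v ∈ S} (1 − d⁺(v)), where d⁺(v) is the number of neighbors u of v in F with f u > f v. -/
section helpers
open SimpleGraph

private lemma acyclic_anti {V : Type*} {G G' : SimpleGraph V} (h : G' ≤ G)
    (hG : G.IsAcyclic) : G'.IsAcyclic :=
  fun _ c hc => hG (c.mapLe h) (hc.mapLe h)

lemma reach_split {V : Type*} {G : SimpleGraph V} {a b x y : V} (w : G.Walk x y) :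
    (G.deleteEdges {s(a,b)}).Reachable x y ∨
      ((G.deleteEdges {s(a,b)}).Reachable x a ∧ (G.deleteEdges {s(a,b)}).Reachable b y) ∨
      ((G.deleteEdges {s(a,b)}).Reachable x b ∧ (G.deleteEdges {s(a,b)}).Reachable a y) := by
  induction w with
  | nil => exact Or.inl (Reachable.refl _)
  | @cons u v z h p ih =>
    by_cases he : s(u, v) = s(a, b)
    · rw [Sym2.eq_iff] at he
      rcases he with ⟨rfl, rfl⟩ | ⟨rfl, rfl⟩
      · rcases ih with h1 | ⟨h1, h2⟩ | ⟨h1, h2⟩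
        · exact Or.inr (Or.inl ⟨Reachable.refl _, h1⟩)
        · exact Or.inl (h1.symm.trans h2)
        · exact Or.inl h2
      · rcases ih with h1 | ⟨h1, h2⟩ | ⟨h1, h2⟩
        · exact Or.inr (Or.inr ⟨Reachable.refl _, h1⟩)
        · exact Or.inl h2
        · exact Or.inl (h1.symm.trans h2)
    · have hadj : (G.deleteEdges {s(a,b)}).Adj u v := by
        rw [deleteEdges_adj]; exact ⟨h, by simpa using he⟩
      rcases ih with h1 | ⟨h1, h2⟩ | ⟨h1, h2⟩
      · exact Or.inl (hadj.reachable.trans h1)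
      · exact Or.inr (Or.inl ⟨hadj.reachable.trans h1, h2⟩)
      · exact Or.inr (Or.inr ⟨hadj.reachable.trans h1, h2⟩)


variable {V : Type*}

private lemma card_cc_delete [Fintype V] {G : SimpleGraph V} (hG : G.IsAcyclic) {a b : V}
    (hab : G.Adj a b) :
    Nat.card (G.deleteEdges {s(a,b)}).ConnectedComponent
      = Nat.card G.ConnectedComponent + 1 := by
  classical
  set G' := G.deleteEdges {s(a,b)} with hG'
  have hbr : ¬ G'.Reachable a b := by
    have := (isAcyclic_iff_forall_adj_isBridge.mp hG) hab
    rw [isBridge_iff] at this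
    exact this
  haveI : Fintype G.ConnectedComponent := Fintype.ofFinite _
  haveI : Fintype G'.ConnectedComponent := Fintype.ofFinite _
  rw [Nat.card_eq_fintype_card, Nat.card_eq_fintype_card]
  set φ : G'.ConnectedComponent → G.ConnectedComponent :=
    ConnectedComponent.map (Hom.ofLE (deleteEdges_le _)) with hφ
  have hφmk : ∀ v : V, φ (G'.connectedComponentMk v) = G.connectedComponentMk v := by
    intro v; simp [hφ, ConnectedComponent.map_mk]
  have hsum : Fintype.card G'.ConnectedComponent =
      ∑ c : G.ConnectedComponent, (Finset.univ.filter fun d => φ d = c).card := by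
    rw [← Finset.card_univ]
    exact Finset.card_eq_sum_card_fiberwise (fun d _ => Finset.mem_univ _)
  have hfib : ∀ c : G.ConnectedComponent,
      (Finset.univ.filter fun d => φ d = c).card
        = if c = G.connectedComponentMk a then 2 else 1 := by
    intro c
    induction c using SimpleGraph.ConnectedComponent.ind with | _ x => ?_
    by_cases hxa : G.Reachable x a
    · rw [if_pos (ConnectedComponent.sound hxa)]
      have : (Finset.univ.filter fun d => φ d = G.connectedComponentMk x)
          = {G'.connectedComponentMk a, G'.connectedComponentMk b} := by
        ext d
        induction d using SimpleGraph.ConnectedComponent.ind with | _ y => ?_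
        simp only [Finset.mem_filter, Finset.mem_univ, true_and, Finset.mem_insert,
          Finset.mem_singleton, hφmk, ConnectedComponent.eq]
        constructor
        · intro hyx
          obtain ⟨w⟩ := hyx.trans hxa
          rcases reach_split w with h1 | ⟨h1, h2⟩ | ⟨h1, h2⟩
          · exact Or.inl h1
          · exact Or.inl h1
          · exact Or.inr h1
        · rintro (h | h)
          · exact (h.mono (deleteEdges_le _)).trans hxa.symm
          · exact (h.mono (deleteEdges_le _)).trans (hab.symm.reachable.trans hxa.symm)
      rw [this]
      rw [Finset.card_insert_of_notMem, Finset.card_singleton]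
      simp only [Finset.mem_singleton, ConnectedComponent.eq]
      exact hbr
    · rw [if_neg (fun h => hxa (ConnectedComponent.exact h))]
      have : (Finset.univ.filter fun d => φ d = G.connectedComponentMk x)
          = {G'.connectedComponentMk x} := by
        ext d
        induction d using SimpleGraph.ConnectedComponent.ind with | _ y => ?_
        simp only [Finset.mem_filter, Finset.mem_univ, true_and, Finset.mem_singleton,
          hφmk, ConnectedComponent.eq]
        constructor
        · intro hyx
          obtain ⟨w⟩ := hyx
          rcases reach_split w with h1 | ⟨h1, h2⟩ | ⟨h1, h2⟩
          · exact h1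
          · exact absurd ((h2.mono (deleteEdges_le _)).symm.trans hab.symm.reachable) hxa
          · exact absurd (h2.mono (deleteEdges_le _)).symm hxa
        · intro h; exact h.mono (deleteEdges_le _)
      rw [this, Finset.card_singleton]
  rw [hsum]
  rw [Finset.sum_congr rfl (fun c _ => hfib c)]
  have h2 : ∀ c : G.ConnectedComponent, (if c = G.connectedComponentMk a then 2 else 1)
      = 1 + (if c = G.connectedComponentMk a then 1 else 0) := by
    intro c; split <;> rfl
  simp only [h2]
  rw [Finset.sum_add_distrib, Finset.sum_ite_eq' Finset.univ _ (fun _ => 1)]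
  simp [Finset.card_univ]


private lemma forest_card_aux : ∀ (n : ℕ) {V : Type*} [Fintype V] (G : SimpleGraph V),
    G.IsAcyclic → Nat.card G.edgeSet = n →
    Nat.card G.ConnectedComponent + n = Fintype.card V := by
  intro n
  induction n with
  | zero =>
    intro V _ G hG hcard
    classical
    have hfin : Finite G.edgeSet := Set.toFinite _
    have : IsEmpty G.edgeSet := by
      rcases Nat.card_eq_zero.mp hcard with h | h
      · exact h
      · exact absurd h (by exact not_infinite_iff_finite.mpr hfin)
    have hbot : G = ⊥ := by
      rw [← edgeSet_eq_empty]
      exact Set.eq_empty_iff_forall_notMem.mpr fun e he => this.false ⟨e, he⟩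
    subst hbot
    have hbij : Function.Bijective ((⊥ : SimpleGraph V).connectedComponentMk) := by
      constructor
      · intro u v h
        exact reachable_bot.mp (ConnectedComponent.exact h)
      · intro c
        exact c.exists_rep
    rw [← Nat.card_eq_of_bijective _ hbij, Nat.card_eq_fintype_card, Nat.add_zero]
  | succ n ih =>
    intro V _ G hG hcard
    classical
    have hne : G.edgeSet.Nonempty := by
      rw [Set.nonempty_iff_ne_empty]
      intro h
      rw [h] at hcard
      simp at hcard
    obtain ⟨e, he⟩ := hne
    induction e using Sym2.ind with | _ a b => ?_
    have hab : G.Adj a b := he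
    set G' := G.deleteEdges {s(a,b)} with hG'def
    have hle : G' ≤ G := deleteEdges_le _
    have hG'ac : G'.IsAcyclic := acyclic_anti hle hG
    have hedge : Nat.card G'.edgeSet = n := by
      have h1 : G'.edgeSet = G.edgeSet \ {s(a,b)} := edgeSet_deleteEdges _
      rw [Nat.card_coe_set_eq, h1, Set.ncard_diff_singleton_of_mem he,
        ← Nat.card_coe_set_eq, hcard]
      omega
    have := ih G' hG'ac hedge
    rw [card_cc_delete hG hab] at this
    omega

private lemma forest_card {V : Type*} [Fintype V] (G : SimpleGraph V) (hG : G.IsAcyclic) :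
    Nat.card G.ConnectedComponent + Nat.card G.edgeSet = Fintype.card V :=
  forest_card_aux _ G hG rfl

end helpers


/-- Let `F` be a finite forest with vertex set `V`, let `f : V → ℝ` be
injective, let `r : ℝ`, and let `S = {v | f v ≥ r}`.  Then the number of connected components
of the subgraph of `F` induced on `S` equals `Σ_{v ∈ S} (1 − d⁺(v))` (taken in `ℤ`), where
`d⁺(v)` is the number of neighbours `u` of `v` in `F` with `f u > f v`. -/
theorem stmt_10 {V : Type*} [Fintype V] [DecidableEq V] (F : SimpleGraph V)
    [DecidableRel F.Adj] (hF : F.IsAcyclic) (f : V → ℝ)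
    (hf : Function.Injective f) (r : ℝ) :
    (Nat.card (F.induce {v : V | r ≤ f v}).ConnectedComponent : ℤ) =
      ∑ v ∈ Finset.univ.filter (fun v : V => r ≤ f v),
        (1 - ((Finset.univ.filter (fun u : V => F.Adj v u ∧ f v < f u)).card : ℤ)) := by
  classical
  set S : Set V := {v : V | r ≤ f v} with hS
  have hind : (F.induce S).IsAcyclic := fun v c hc =>
    hF (c.map (SimpleGraph.Embedding.comap (Function.Embedding.subtype _) F).toHom)
       (hc.map (SimpleGraph.Embedding.comap (Function.Embedding.subtype _) F).injective)
  have hform := forest_card (F.induce S) hind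
  have hcardS : Fintype.card S = (Finset.univ.filter (fun v : V => r ≤ f v)).card := by
    rw [Fintype.card_subtype]
    congr 1
  set T : Finset (V × V) := Finset.univ.filter
      (fun p : V × V => r ≤ f p.1 ∧ F.Adj p.1 p.2 ∧ f p.1 < f p.2) with hT
  have hTsum : ∑ v ∈ Finset.univ.filter (fun v : V => r ≤ f v),
      (Finset.univ.filter (fun u : V => F.Adj v u ∧ f v < f u)).card = T.card := by
    rw [Finset.card_eq_sum_card_fiberwise
      (f := Prod.fst) (t := Finset.univ.filter (fun v : V => r ≤ f v))
      (fun p hp => by simp only [hT, Finset.mem_coe, Finset.mem_filter, Finset.mem_univ, true_and] at hp ⊢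
                      exact hp.1)]
    refine Finset.sum_congr rfl fun v hv => ?_
    rw [Finset.mem_filter] at hv
    refine (Finset.card_bij (fun p _ => p.2) ?_ ?_ ?_).symm
    · intro p hp
      simp only [hT, Finset.mem_filter, Finset.mem_univ, true_and] at hp ⊢
      obtain ⟨⟨h1, h2, h3⟩, h4⟩ := hp
      subst h4
      exact ⟨h2, h3⟩
    · intro p hp q hq hpq
      simp only [hT, Finset.mem_filter] at hp hq
      exact Prod.ext (hp.2.trans hq.2.symm) hpq
    · intro u hu
      simp only [Finset.mem_filter, Finset.mem_univ, true_and] at hu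
      exact ⟨(v, u), by simp [hT, hv.2, hu.1, hu.2]⟩
  haveI instE : Fintype ↥(F.induce S).edgeSet := Fintype.ofFinite _
  have hE : Nat.card (F.induce S).edgeSet = T.card := by
    rw [Nat.card_eq_fintype_card, ← Set.toFinset_card]
    refine (Finset.card_bij
      (fun p hp => s((⟨p.1, (Finset.mem_filter.mp hp).2.1⟩ : S),
        (⟨p.2, le_of_lt (lt_of_le_of_lt (Finset.mem_filter.mp hp).2.1
          (Finset.mem_filter.mp hp).2.2.2)⟩ : S))) ?_ ?_ ?_).symm
    · intro p hp
      rw [Set.mem_toFinset, SimpleGraph.mem_edgeSet]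
      simp only [SimpleGraph.comap_adj, Function.Embedding.coe_subtype]
      exact (Finset.mem_filter.mp hp).2.2.1
    · intro p hp q hq hpq
      rw [Sym2.eq_iff] at hpq
      rcases hpq with ⟨h1, h2⟩ | ⟨h1, h2⟩
      · exact Prod.ext (congrArg Subtype.val h1) (congrArg Subtype.val h2)
      · exfalso
        have e1 : p.1 = q.2 := congrArg Subtype.val h1
        have e2 : p.2 = q.1 := congrArg Subtype.val h2
        have hp' := (Finset.mem_filter.mp hp).2.2.2
        have hq' := (Finset.mem_filter.mp hq).2.2.2
        rw [e1, e2] at hp'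
        exact lt_asymm hp' hq'
    · intro e he
      induction e using Sym2.ind with | _ x y => ?_
      rw [Set.mem_toFinset, SimpleGraph.mem_edgeSet] at he
      have hadj : F.Adj x.1 y.1 := by simpa using he
      have hne : f x.1 ≠ f y.1 := fun h => he.ne (Subtype.ext (hf h))
      rcases hne.lt_or_gt with hlt | hlt
      · refine ⟨(x.1, y.1), ?_, ?_⟩
        · simp only [hT, Finset.mem_filter, Finset.mem_univ, true_and]
          exact ⟨x.2, hadj, hlt⟩
        · rfl
      · refine ⟨(y.1, x.1), ?_, ?_⟩
        · simp only [hT, Finset.mem_filter, Finset.mem_univ, true_and]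
          exact ⟨y.2, hadj.symm, hlt⟩
        · exact Sym2.eq_swap
  rw [Finset.sum_sub_distrib]
  simp only [Finset.sum_const, nsmul_eq_mul, mul_one]
  rw [← Nat.cast_sum, hTsum]
  rw [hcardS, hE] at hform
  omega
end

section
/- Let G be a finite simple graph with vertex set V, let f : V → ℝ be injective, let r ∈ ℝ, and let S = {v ∈ V : f v ≥ r}. Then every connected component of the subgraph of G induced on S contains at least one local maximum of f (a vertex all of whose neighbors in G have strictly smaller f-value); in particular, the number of connected components of the induced subgraph on S is at most #{v ∈ V : v is a local maximum of f and f v ≥ r}. -/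
/-- Let `G` be a finite simple graph, `f : V → ℝ` injective, `r : ℝ`, and
`S = {v | f v ≥ r}`.  Then every connected component of the subgraph of `G` induced on `S`
contains at least one local maximum of `f` (a vertex all of whose neighbours in `G` have
strictly smaller `f`-value); in particular the number of connected components of the induced
subgraph on `S` is at most `#{v | v is a local maximum of f and f v ≥ r}`. -/
theorem stmt_11 {V : Type*} [Fintype V] (G : SimpleGraph V) (f : V → ℝ)
    (hf : Function.Injective f) (r : ℝ) :
    (∀ C : (G.induce {v : V | r ≤ f v}).ConnectedComponent,
        ∃ x : ↥{v : V | r ≤ f v},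
          (G.induce {v : V | r ≤ f v}).connectedComponentMk x = C ∧
          ∀ y : V, G.Adj ↑x y → f y < f ↑x) ∧
    Nat.card (G.induce {v : V | r ≤ f v}).ConnectedComponent ≤
      Nat.card {v : V // (∀ y : V, G.Adj v y → f y < f v) ∧ r ≤ f v} := by
  classical
  set S : Set V := {v : V | r ≤ f v} with hS
  have key : ∀ C : (G.induce S).ConnectedComponent,
      ∃ x : ↥S, (G.induce S).connectedComponentMk x = C ∧
        ∀ y : V, G.Adj ↑x y → f y < f ↑x := by
    intro C
    obtain ⟨x0, hx0⟩ := C.exists_rep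
    set t : Finset ↥S :=
      Finset.univ.filter (fun z => (G.induce S).connectedComponentMk z = C) with ht
    have hx0t : x0 ∈ t := by simp only [ht, Finset.mem_filter, Finset.mem_univ, true_and]; exact hx0
    obtain ⟨x, hxt, hmax⟩ := t.exists_max_image (fun z => f ↑z) ⟨x0, hx0t⟩
    have hxC : (G.induce S).connectedComponentMk x = C := by
      simpa [ht] using hxt
    refine ⟨x, hxC, fun y hadj => ?_⟩
    have hne : f y ≠ f ↑x := fun h => G.ne_of_adj hadj.symm (hf h)
    by_cases hy : r ≤ f y
    · have hyS : y ∈ S := hy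
      have hadj' : (G.induce S).Adj x ⟨y, hyS⟩ := by
        simpa using hadj
      have hyC : (G.induce S).connectedComponentMk ⟨y, hyS⟩ = C := by
        rw [← hxC]
        exact SimpleGraph.ConnectedComponent.sound hadj'.symm.reachable
      have hyt : (⟨y, hyS⟩ : ↥S) ∈ t := by simp [ht, hyC]
      have := hmax _ hyt
      exact lt_of_le_of_ne this hne
    · exact lt_of_lt_of_le (lt_of_not_ge hy) x.2
  refine ⟨key, ?_⟩
  choose g hg1 hg2 using key
  refine Nat.card_le_card_of_injective
    (fun C => ⟨↑(g C), hg2 C, (g C).2⟩) ?_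
  intro C1 C2 h
  have hval := congrArg Subtype.val h
  have hgg : g C1 = g C2 := Subtype.ext hval
  rw [← hg1 C1, ← hg1 C2, hgg]
end
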